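/- Let h ∈ ℝ. Every solution W : (0,∞) → ℝ of the ODE (1/2)W(y) − (y/2)W′(y) − W″(y) = h can be written as W(y) = −c₁ W₁(y) + c₀ W₀(y) + 2h for some constants c₀, c₁ ∈ ℝ, where W₀(y) = y and W₁(y) = y ∫_y^∞ e^{−ζ²/4} ζ^{−2} dζ. Conversely, every function of this form is a solution. In particular, {W₀, W₁} is a fundamental system of solutions of the homogeneous equation (1/2)w − (y/2)w′ − w″ = 0 on (0,∞), and the constant 2h is a particular solution of the inhomogeneous equation. -/

import Mathlib

/-! `W₀(y) = y` and `W₁` solve the homogeneous equation by direct differentiation, using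
`W₁' = ∫_y^∞ e^{-ζ²/4} ζ^{-2} dζ - e^{-y²/4}/y` and `W₁'' = e^{-y²/4}/2`. By Abel's identity the
Wronskian of two homogeneous solutions, multiplied by the integrating factor `e^{y²/4}`, is
constant on `(0,∞)`. Since `W(W₀, W₁) = -e^{-y²/4}` never vanishes, the two constant Wronskians
of `W - 2h` with `W₀` and with `W₁` express `W - 2h` as a combination of `W₀` and `W₁`
(Cramer's rule). Linear independence holds because `W₁(y)/y` is strictly decreasing. -/

set_option autoImplicit false

open Set Filter

/-- The decaying solution `W₁(y) = y ∫_y^∞ e^{-ζ²/4} ζ^{-2} dζ` of the homogeneous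
Hermite-type equation, defined for `y > 0`. -/
noncomputable def W1 (y : ℝ) : ℝ :=
  y * ∫ ζ in Ioi y, Real.exp (-ζ ^ 2 / 4) / ζ ^ 2

/-- `W` solves the Hermite-type ODE `(1/2)W - (y/2)W' - W'' = h` on `(0,∞)`. -/
def SolvesHermite (h : ℝ) (W : ℝ → ℝ) : Prop :=
  ∀ y : ℝ, 0 < y →
    DifferentiableAt ℝ W y ∧ DifferentiableAt ℝ (deriv W) y ∧
    1 / 2 * W y - y / 2 * deriv W y - deriv (deriv W) y = h

open MeasureTheory Topology

theorem hasDerivAt_integral_Ioi {E : Type*} [NormedAddCommGroup E] [NormedSpace ℝ E]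
    [CompleteSpace E] {f : ℝ → E} {c y : ℝ} (hcy : c < y) (hf : IntegrableOn f (Ioi c))
    (hmeas : StronglyMeasurableAtFilter f (𝓝 y)) (hcont : ContinuousAt f y) :
    HasDerivAt (fun x => ∫ t in Ioi x, f t) (-f y) y := by
  have htail : (fun x => ∫ t in Ioi x, f t) =ᶠ[𝓝 y]
      fun x => (∫ t in Ioi c, f t) - ∫ t in c..x, f t := by
    filter_upwards [Ioi_mem_nhds hcy] with x hcx
    rw [← intervalIntegral.integral_Ioi_sub_Ioi hf (le_of_lt hcx), sub_sub_cancel]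
  have hFTC : HasDerivAt (fun x => ∫ t in c..x, f t) (f y) y :=
    intervalIntegral.integral_hasDerivAt_right
      ((intervalIntegrable_iff_integrableOn_Ioc_of_le hcy.le).2
        (hf.mono_set Ioc_subset_Ioi_self)) hmeas hcont
  simpa using ((hasDerivAt_const y _).sub hFTC).congr_of_eventuallyEq htail

noncomputable def hermiteKernel (ζ : ℝ) : ℝ := Real.exp (-ζ ^ 2 / 4) / ζ ^ 2

noncomputable def tailIntegral (y : ℝ) : ℝ := ∫ ζ in Ioi y, hermiteKernel ζ

theorem W1_eq_mul_tailIntegral (y : ℝ) : W1 y = y * tailIntegral y := rfl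

theorem measurable_hermiteKernel : Measurable hermiteKernel := by
  unfold hermiteKernel; fun_prop

theorem integrableOn_hermiteKernel {c : ℝ} (hc : 0 < c) :
    IntegrableOn hermiteKernel (Ioi c) := by
  have hgauss : IntegrableOn (fun ζ : ℝ => Real.exp (-(1 / 4) * ζ ^ 2) / c ^ 2) (Ioi c) :=
    ((integrable_exp_neg_mul_sq (by norm_num : (0 : ℝ) < 1 / 4)).div_const _).integrableOn
  refine hgauss.mono' measurable_hermiteKernel.aestronglyMeasurable ?_
  filter_upwards [ae_restrict_mem measurableSet_Ioi] with ζ (hζ : c < ζ)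
  rw [Real.norm_eq_abs, abs_of_nonneg (by unfold hermiteKernel; positivity), hermiteKernel,
    show -ζ ^ 2 / 4 = -(1 / 4) * ζ ^ 2 by ring]
  gcongr

theorem hasDerivAt_tailIntegral {y : ℝ} (hy : 0 < y) :
    HasDerivAt tailIntegral (-hermiteKernel y) y :=
  hasDerivAt_integral_Ioi (half_lt_self hy) (integrableOn_hermiteKernel (half_pos hy))
    measurable_hermiteKernel.stronglyMeasurable.stronglyMeasurableAtFilter
    (by unfold hermiteKernel; fun_prop (disch := positivity))

theorem tailIntegral_strictAntiOn : StrictAntiOn tailIntegral (Ioi 0) := by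
  refine strictAntiOn_of_hasDerivWithinAt_neg (f' := fun y => -hermiteKernel y) (convex_Ioi 0)
    (fun y hy => (hasDerivAt_tailIntegral hy).continuousAt.continuousWithinAt)
    (fun y hy => ?_) (fun y hy => ?_) <;> rw [interior_Ioi] at hy
  · exact (hasDerivAt_tailIntegral hy).hasDerivWithinAt
  · have : 0 < hermiteKernel y := by rw [mem_Ioi] at hy; unfold hermiteKernel; positivity
    linarith

noncomputable def W1' (y : ℝ) : ℝ := tailIntegral y - Real.exp (-y ^ 2 / 4) / y

theorem hasDerivAt_W1 {y : ℝ} (hy : 0 < y) : HasDerivAt W1 (W1' y) y := by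
  refine ((hasDerivAt_id y).mul (hasDerivAt_tailIntegral hy)).congr_deriv ?_
  rw [W1', hermiteKernel, id]
  field_simp
  ring

theorem hasDerivAt_W1' {y : ℝ} (hy : 0 < y) :
    HasDerivAt W1' (Real.exp (-y ^ 2 / 4) / 2) y := by
  have hgauss :
      HasDerivAt (fun x : ℝ => Real.exp (-x ^ 2 / 4)) (-y / 2 * Real.exp (-y ^ 2 / 4)) y :=
    (((hasDerivAt_pow 2 y).neg.div_const 4).exp).congr_deriv (by simp only [Pi.neg_apply]; ring)
  refine ((hasDerivAt_tailIntegral hy).sub (hgauss.div (hasDerivAt_id y) hy.ne')).congr_deriv ?_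
  rw [hermiteKernel, id]
  field_simp
  ring

theorem W1_sub_mul_W1' {y : ℝ} (hy : y ≠ 0) : W1 y - y * W1' y = Real.exp (-y ^ 2 / 4) := by
  rw [W1_eq_mul_tailIntegral, W1']
  field_simp
  ring

theorem SolvesHermite.of_hasDerivAt {h : ℝ} {W W' W'' : ℝ → ℝ}
    (hW : ∀ y, 0 < y → HasDerivAt W (W' y) y) (hW' : ∀ y, 0 < y → HasDerivAt W' (W'' y) y)
    (hode : ∀ y, 0 < y → 1 / 2 * W y - y / 2 * W' y - W'' y = h) : SolvesHermite h W := by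
  intro y hy
  have hderiv : deriv W =ᶠ[𝓝 y] W' := by
    filter_upwards [Ioi_mem_nhds hy] with x hx using (hW x hx).deriv
  refine ⟨(hW y hy).differentiableAt,
    ((hW' y hy).congr_of_eventuallyEq hderiv).differentiableAt, ?_⟩
  rw [hderiv.deriv_eq, (hW y hy).deriv, (hW' y hy).deriv]
  exact hode y hy

theorem solvesHermite_combination (h c₁ c₀ : ℝ) :
    SolvesHermite h (fun y => -c₁ * W1 y + c₀ * y + 2 * h) := by
  refine SolvesHermite.of_hasDerivAt (W' := fun y => -c₁ * W1' y + c₀)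
    (W'' := fun y => -c₁ * (Real.exp (-y ^ 2 / 4) / 2)) (fun y hy => ?_) (fun y hy => ?_)
    (fun y hy => ?_)
  · simpa using (((hasDerivAt_W1 hy).const_mul (-c₁)).add
      ((hasDerivAt_id y).const_mul c₀)).add_const (2 * h)
  · exact ((hasDerivAt_W1' hy).const_mul (-c₁)).add_const c₀
  · linear_combination (-c₁ / 2) * W1_sub_mul_W1' hy.ne'

theorem SolvesHermite.sub_two_mul {h : ℝ} {W : ℝ → ℝ} (hW : SolvesHermite h W) :
    SolvesHermite 0 (fun y => W y - 2 * h) :=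
  .of_hasDerivAt (fun y hy => (hW y hy).1.hasDerivAt.sub_const (2 * h))
    (fun y hy => (hW y hy).2.1.hasDerivAt) (fun y hy => by linarith [(hW y hy).2.2])

noncomputable def wronskian (u v : ℝ → ℝ) (y : ℝ) : ℝ := u y * deriv v y - deriv u y * v y

theorem mul_wronskian (u v w : ℝ → ℝ) (y : ℝ) :
    u y * wronskian v w y = wronskian u w y * v y - wronskian u v y * w y := by
  unfold wronskian; ring

theorem hasDerivAt_wronskian_mul_exp {u v : ℝ → ℝ} (hu : SolvesHermite 0 u)
    (hv : SolvesHermite 0 v) {y : ℝ} (hy : 0 < y) :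
    HasDerivAt (fun x => wronskian u v x * Real.exp (x ^ 2 / 4)) 0 y := by
  obtain ⟨hu₁, hu₂, hu_ode⟩ := hu y hy
  obtain ⟨hv₁, hv₂, hv_ode⟩ := hv y hy
  have hexp : HasDerivAt (fun x : ℝ => Real.exp (x ^ 2 / 4)) (y / 2 * Real.exp (y ^ 2 / 4)) y :=
    (((hasDerivAt_pow 2 y).div_const 4).exp).congr_deriv (by ring)
  refine (((hu₁.hasDerivAt.mul hv₂.hasDerivAt).sub
    (hu₂.hasDerivAt.mul hv₁.hasDerivAt)).mul hexp).congr_deriv ?_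
  simp only [Pi.mul_apply, Pi.sub_apply]
  linear_combination Real.exp (y ^ 2 / 4) * (v y * hu_ode - u y * hv_ode)

theorem exists_wronskian_mul_exp_eq {u v : ℝ → ℝ} (hu : SolvesHermite 0 u)
    (hv : SolvesHermite 0 v) : ∃ C, ∀ y, 0 < y → wronskian u v y * Real.exp (y ^ 2 / 4) = C :=
  isOpen_Ioi.exists_is_const_of_deriv_eq_zero isPreconnected_Ioi
    (fun _ hy => (hasDerivAt_wronskian_mul_exp hu hv hy).differentiableAt.differentiableWithinAt)
    (fun _ hy => (hasDerivAt_wronskian_mul_exp hu hv hy).deriv)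

theorem solvesHermite_id : SolvesHermite 0 (fun y => y) := by
  simpa using solvesHermite_combination 0 0 1

theorem solvesHermite_W1 : SolvesHermite 0 W1 := by
  simpa using solvesHermite_combination 0 (-1) 0

theorem solvesHermite_const (h : ℝ) : SolvesHermite h (fun _ => 2 * h) := by
  simpa using solvesHermite_combination h 0 0

theorem wronskian_id_W1_mul_exp {y : ℝ} (hy : 0 < y) :
    wronskian (fun y => y) W1 y * Real.exp (y ^ 2 / 4) = -1 := by
  rw [wronskian, (hasDerivAt_W1 hy).deriv, deriv_id'', one_mul, ← neg_sub,
    W1_sub_mul_W1' hy.ne', neg_mul, ← Real.exp_add, neg_div, neg_add_cancel, Real.exp_zero]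

theorem SolvesHermite.exists_eq_combination {h : ℝ} {W : ℝ → ℝ} (hW : SolvesHermite h W) :
    ∃ c₁ c₀ : ℝ, ∀ y, 0 < y → W y = -c₁ * W1 y + c₀ * y + 2 * h := by
  obtain ⟨α, hα⟩ := exists_wronskian_mul_exp_eq hW.sub_two_mul solvesHermite_id
  obtain ⟨β, hβ⟩ := exists_wronskian_mul_exp_eq hW.sub_two_mul solvesHermite_W1
  refine ⟨-α, -β, fun y hy => ?_⟩
  have hcramer := mul_wronskian (fun y => W y - 2 * h) (fun y => y) W1 y
  beta_reduce at hcramer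
  linear_combination (-Real.exp (y ^ 2 / 4)) * hcramer
    + (W y - 2 * h) * wronskian_id_W1_mul_exp hy - y * hβ y hy + W1 y * hα y hy

theorem eq_zero_of_mul_id_add_mul_W1_eq_zero {c₀ c₁ : ℝ}
    (H : ∀ y, 0 < y → c₀ * y + c₁ * W1 y = 0) : c₀ = 0 ∧ c₁ = 0 := by
  have h₁ := H 1 one_pos
  have h₂ := H 2 two_pos
  rw [W1_eq_mul_tailIntegral] at h₁ h₂
  have hgap : tailIntegral 2 < tailIntegral 1 :=
    tailIntegral_strictAntiOn (mem_Ioi.2 one_pos) (mem_Ioi.2 two_pos) one_lt_two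
  have hprod : c₁ * (tailIntegral 1 - tailIntegral 2) = 0 := by linear_combination h₁ - h₂ / 2
  have hc₁ : c₁ = 0 := (mul_eq_zero.1 hprod).resolve_right (sub_ne_zero.2 hgap.ne')
  subst hc₁
  constructor <;> linarith

/-- **General solution of the Hermite-type ODE.**
Every solution of `(1/2)W - (y/2)W' - W'' = h` on `(0,∞)` has the form
`W = -c₁ W₁ + c₀ W₀ + 2h` with `W₀(y) = y`, and conversely every such function is a
solution; `{W₀, W₁}` is a fundamental system of the homogeneous equation (both solve it
and they are linearly independent), and the constant `2h` is a particular solution. -/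
theorem hermite_general_solution (h : ℝ) :
    -- every solution has the stated form
    (∀ W : ℝ → ℝ, SolvesHermite h W →
      ∃ c₁ c₀ : ℝ, ∀ y : ℝ, 0 < y → W y = -c₁ * W1 y + c₀ * y + 2 * h) ∧
    -- conversely, every function of this form is a solution
    (∀ c₁ c₀ : ℝ, SolvesHermite h (fun y => -c₁ * W1 y + c₀ * y + 2 * h)) ∧
    -- W₀ and W₁ solve the homogeneous equation
    SolvesHermite 0 (fun y => y) ∧
    SolvesHermite 0 W1 ∧
    -- linear independence of {W₀, W₁} on (0,∞)
    (∀ c₀ c₁ : ℝ, (∀ y : ℝ, 0 < y → c₀ * y + c₁ * W1 y = 0) → c₀ = 0 ∧ c₁ = 0) ∧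
    -- the constant 2h is a particular solution of the inhomogeneous equation
    SolvesHermite h (fun _ => 2 * h) :=
  ⟨fun _ hW => hW.exists_eq_combination, solvesHermite_combination h, solvesHermite_id,
    solvesHermite_W1, fun _ _ => eq_zero_of_mul_id_add_mul_W1_eq_zero, solvesHermite_const h⟩
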